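/- Suppose f is convex, differentiable, and satisfies the block-Lipschitz assumption with constant L. Fix s ≥ 2 and k ∈ {1,…,K}, and suppose the points satisfy x_{s,k} = (A_{s−1}/A_s) ỹ_{s−1} + (a_s/A_s) v_{s,k−1} and y_{s,k} = (A_{s−1}/A_s) ỹ_{s−1} + (a_s/A_s) v_{s,k}, where A_s = A_{s−1} + a_s with a_s > 0, A_{s−1} > 0. Then for every u ∈ ℝ^d and every vector q_{s,k} ∈ ℝ^d: E_{s,k}(u) ≤ −A_{s−1}(f(ỹ_{s−1}) − f(x_{s,k}) − ⟨∇f(x_{s,k}), ỹ_{s−1} − x_{s,k}⟩) + a_s ⟨∇f(x_{s,k}) − q_{s,k}, v_{s,k} − u⟩ + (L a_s²/(2 A_s) − K(1 + A_{s−1}γ)/2)‖v_{s,k} − v_{s,k−1}‖², where E_{s,k}(u) := A_s (f(y_{s,k}) − f(x_{s,k})) − A_{s−1}(f(ỹ_{s−1}) − f(x_{s,k})) + a_s ⟨∇f(x_{s,k}) − q_{s,k}, x_{s,k} − u⟩ + a_s ⟨q_{s,k}, x_{s,k} − v_{s,k}⟩ − (K(1 + A_{s−1}γ)/2)‖v_{s,k}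 − v_{s,k−1}‖². -/

import Mathlib

noncomputable section
open MeasureTheory Finset Set RealInnerProductSpace

abbrev Euc (d : ℕ) := EuclideanSpace ℝ (Fin d)

def blockMask {d m : ℕ} (blk : Fin d → Fin m) (j : Fin m) (z : Euc d) : Euc d :=
  (EuclideanSpace.equiv (Fin d) ℝ).symm fun i => if blk i = j then z i else 0

def blockCombine {d m : ℕ} (blk : Fin d → Fin m) (j : ℕ) (x y : Euc d) : Euc d :=
  (EuclideanSpace.equiv (Fin d) ℝ).symm fun i => if (blk i : ℕ) + 1 ≤ j then x i else y i

def quadForm {d : ℕ} (Q : Matrix (Fin d) (Fin d) ℝ) (z : Euc d) : ℝ :=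
  ∑ i, ∑ i', Q i i' * z i * z i'

def keepGE {d m : ℕ} (blk : Fin d → Fin m) (j : ℕ) (Q : Matrix (Fin d) (Fin d) ℝ) :
    Matrix (Fin d) (Fin d) ℝ :=
  Matrix.of fun i i' => if j ≤ (blk i : ℕ) + 1 ∧ j ≤ (blk i' : ℕ) + 1 then Q i i' else 0

def Qtilde {d m : ℕ} (blk : Fin d → Fin m) (Q : Fin m → Matrix (Fin d) (Fin d) ℝ) :
    Matrix (Fin d) (Fin d) ℝ :=
  ∑ j : Fin m, (keepGE blk ((j : ℕ) + 1) (Q j) + keepGE blk ((j : ℕ) + 2) (Q j))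

def specNorm {d : ℕ} (Q : Matrix (Fin d) (Fin d) ℝ) : ℝ :=
  ‖Matrix.toEuclideanCLM (𝕜 := ℝ) Q‖

def bigL {d m : ℕ} (blk : Fin d → Fin m) (Q : Fin m → Matrix (Fin d) (Fin d) ℝ) : ℝ :=
  Real.sqrt (2 * specNorm (Qtilde blk Q))

def BlockLip {d m : ℕ} (blk : Fin d → Fin m) (f : Euc d → ℝ)
    (Q : Fin m → Matrix (Fin d) (Fin d) ℝ) : Prop :=
  ∀ (j : Fin m) (x y : Euc d),
    ‖blockMask blk j (gradient f x) - blockMask blk j (gradient f y)‖ ^ 2 ≤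
      quadForm (Q j) (x - y)

def SubgradStrongConvex {d : ℕ} (γ : ℝ) (g : Euc d → ℝ) : Prop :=
  ∀ x y s : Euc d, (∀ z, g x + ⟪s, z - x⟫ ≤ g z) →
    g x + ⟪s, y - x⟫ + γ / 2 * ‖y - x‖ ^ 2 ≤ g y

/-! Moving from `y` to `x` one block at a time (through the points `blockCombine blk j x y`),
the first-order gap of the `j`-th move is controlled by the block Lipschitz condition; along that
move the distance to `x` interpolates between the tails of `y - x` from block `j + 1` and from
block `j + 2`, whose `Q j`-seminorms are the two terms of `Qtilde`. Summing over the blocks with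
Cauchy–Schwarz gives the block descent lemma `f y ≤ f x + ⟪∇f x, y - x⟫ + L/2 ‖y - x‖²`.
The estimate of `E_{s,k}(u)` is this lemma at `x_{s,k}, y_{s,k}`, since
`y_{s,k} - x_{s,k} = (a_s / A_s) (v_{s,k} - v_{s,k-1})` and
`A_s (y_{s,k} - x_{s,k}) = A_{s-1} (ỹ_{s-1} - x_{s,k}) + a_s (v_{s,k} - x_{s,k})`. -/

section

variable {d m : ℕ}

lemma quadForm_add (A B : Matrix (Fin d) (Fin d) ℝ) (z : Euc d) :
    quadForm (A + B) z = quadForm A z + quadForm B z := by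
  simp only [quadForm, Matrix.add_apply, add_mul, sum_add_distrib]

lemma quadForm_sum {ι : Type*} (s : Finset ι) (M : ι → Matrix (Fin d) (Fin d) ℝ)
    (z : Euc d) :
    quadForm (∑ j ∈ s, M j) z = ∑ j ∈ s, quadForm (M j) z := by
  simp only [quadForm, Matrix.sum_apply, sum_mul]
  exact (Finset.sum_congr rfl fun _ _ => Finset.sum_comm).trans Finset.sum_comm

lemma quadForm_eq_inner (Q : Matrix (Fin d) (Fin d) ℝ) (z : Euc d) :
    quadForm Q z = ⟪Matrix.toEuclideanCLM (𝕜 := ℝ) Q z, z⟫ := by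
  simp only [quadForm, EuclideanSpace.inner_eq_star_dotProduct, Matrix.ofLp_toEuclideanCLM,
    dotProduct, Matrix.mulVec, star_trivial, mul_sum]
  exact Finset.sum_congr rfl fun _ _ => Finset.sum_congr rfl fun _ _ => by ring

lemma quadForm_le_specNorm_mul (Q : Matrix (Fin d) (Fin d) ℝ) (z : Euc d) :
    quadForm Q z ≤ specNorm Q * ‖z‖ ^ 2 :=
  calc quadForm Q z ≤ ‖Matrix.toEuclideanCLM (𝕜 := ℝ) Q z‖ * ‖z‖ := by
        rw [quadForm_eq_inner]; exact real_inner_le_norm _ _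
    _ ≤ specNorm Q * ‖z‖ * ‖z‖ := by gcongr; exact ContinuousLinearMap.le_opNorm _ _
    _ = specNorm Q * ‖z‖ ^ 2 := by ring

open scoped MatrixOrder in
lemma quadForm_eq_norm_sq {Q : Matrix (Fin d) (Fin d) ℝ} (hQ : Q.PosSemidef) (z : Euc d) :
    quadForm Q z = ‖Matrix.toEuclideanCLM (𝕜 := ℝ) (CFC.sqrt Q) z‖ ^ 2 := by
  set T := Matrix.toEuclideanCLM (𝕜 := ℝ) (CFC.sqrt Q)
  have hT : ContinuousLinearMap.adjoint T = T := by
    rw [← ContinuousLinearMap.star_eq_adjoint, ← map_star,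
      (CFC.sqrt_nonneg Q).isSelfAdjoint.star_eq]
  have hQT : Matrix.toEuclideanCLM (𝕜 := ℝ) Q = T * T := by
    rw [← map_mul, CFC.sqrt_mul_sqrt_self Q hQ.nonneg]
  rw [quadForm_eq_inner, hQT]
  change ⟪T (T z), z⟫ = _
  rw [← hT, ContinuousLinearMap.adjoint_inner_left, hT, real_inner_self_eq_norm_sq]

lemma quadForm_nonneg {Q : Matrix (Fin d) (Fin d) ℝ} (hQ : Q.PosSemidef) (z : Euc d) :
    0 ≤ quadForm Q z := by
  rw [quadForm_eq_norm_sq hQ]; positivity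

lemma sqrt_quadForm_segment_le {Q : Matrix (Fin d) (Fin d) ℝ} (hQ : Q.PosSemidef) (u v : Euc d)
    {t : ℝ} (ht₀ : 0 ≤ t) (ht₁ : t ≤ 1) :
    √(quadForm Q (t • u + (1 - t) • v)) ≤ t * √(quadForm Q u) + (1 - t) * √(quadForm Q v) := by
  simp only [quadForm_eq_norm_sq hQ, Real.sqrt_sq (norm_nonneg _), map_add, map_smul]
  calc _ ≤ ‖t • _‖ + ‖(1 - t) • _‖ := norm_add_le _ _
    _ = _ := by
      rw [norm_smul, norm_smul, Real.norm_of_nonneg ht₀, Real.norm_of_nonneg (by linarith)]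

section Blocks

variable (blk : Fin d → Fin m)

/-- The vector counterpart of `keepGE`: keeps the blocks `S^j, S^{j+1}, …`, numbered from `1`
as in `keepGE` and `blockCombine`. -/
def blockMaskGE (j : ℕ) (z : Euc d) : Euc d :=
  (EuclideanSpace.equiv (Fin d) ℝ).symm fun i => if j ≤ (blk i : ℕ) + 1 then z i else 0

lemma quadForm_keepGE (j : ℕ) (Q : Matrix (Fin d) (Fin d) ℝ) (z : Euc d) :
    quadForm (keepGE blk j Q) z = quadForm Q (blockMaskGE blk j z) := by
  refine Finset.sum_congr rfl fun i _ => Finset.sum_congr rfl fun i' _ => ?_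
  simp only [keepGE, blockMaskGE, Matrix.of_apply, PiLp.continuousLinearEquiv_symm_apply]
  split_ifs <;> first | (exfalso; omega) | ring

lemma blockMaskGE_eq_blockMask_add (j : Fin m) (z : Euc d) :
    blockMaskGE blk (j + 1) z = blockMask blk j z + blockMaskGE blk (j + 2) z := by
  ext i
  simp only [blockMaskGE, blockMask, PiLp.continuousLinearEquiv_symm_apply, PiLp.add_apply,
    Fin.ext_iff]
  split_ifs <;> first | (exfalso; omega) | simp

lemma blockMask_sub (j : Fin m) (x y : Euc d) :
    blockMask blk j (x - y) = blockMask blk j x - blockMask blk j y := by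
  ext i
  simp only [blockMask, PiLp.continuousLinearEquiv_symm_apply, PiLp.sub_apply]
  split_ifs <;> simp

lemma inner_blockMask_right (j : Fin m) (x z : Euc d) :
    ⟪x, blockMask blk j z⟫ = ⟪blockMask blk j x, blockMask blk j z⟫ := by
  simp only [EuclideanSpace.inner_eq_star_dotProduct, dotProduct, blockMask,
    PiLp.continuousLinearEquiv_symm_apply, star_trivial]
  exact Finset.sum_congr rfl fun i _ => by split_ifs <;> simp

lemma sum_blockMask (z : Euc d) : ∑ j, blockMask blk j z = z := by
  ext i
  simp [blockMask, WithLp.ofLp_sum]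

lemma sum_norm_blockMask_sq (z : Euc d) : ∑ j, ‖blockMask blk j z‖ ^ 2 = ‖z‖ ^ 2 := by
  simp only [EuclideanSpace.norm_sq_eq, blockMask, PiLp.continuousLinearEquiv_symm_apply]
  rw [Finset.sum_comm]
  refine Finset.sum_congr rfl fun i _ => ?_
  rw [Finset.sum_eq_single (blk i)] <;> simp +contextual [eq_comm]

lemma blockCombine_zero (x y : Euc d) : blockCombine blk 0 x y = y := by
  ext i
  simp [blockCombine]

lemma blockCombine_card (x y : Euc d) : blockCombine blk m x y = x := by
  ext i
  simp [blockCombine]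

lemma blockCombine_eq_add_blockMask (j : Fin m) (x y : Euc d) :
    blockCombine blk j x y = blockCombine blk (j + 1) x y + blockMask blk j (y - x) := by
  ext i
  simp only [blockCombine, blockMask, PiLp.continuousLinearEquiv_symm_apply, PiLp.add_apply,
    PiLp.sub_apply, Fin.ext_iff]
  split_ifs <;> first | (exfalso; omega) | simp

lemma blockCombine_succ_sub (j : Fin m) (x y : Euc d) :
    blockCombine blk (j + 1) x y - x = blockMaskGE blk (j + 2) (y - x) := by
  ext i
  simp only [blockCombine, blockMaskGE, PiLp.continuousLinearEquiv_symm_apply, PiLp.sub_apply]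
  split_ifs <;> first | (exfalso; omega) | simp

end Blocks

section Segment

lemma sub_le_of_hasDerivAt_le_affine {φ φ' : ℝ → ℝ} {a b : ℝ}
    (hφ : ∀ t ∈ Icc (0 : ℝ) 1, HasDerivAt φ (φ' t) t)
    (hle : ∀ t ∈ Icc (0 : ℝ) 1, φ' t ≤ a * t + b * (1 - t)) :
    φ 1 - φ 0 ≤ (a + b) / 2 := by
  have hB : ∀ t : ℝ, HasDerivAt (fun t => φ 0 + a * t ^ 2 / 2 + b * (t - t ^ 2 / 2))
      (a * t + b * (1 - t)) t := fun t => by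
    have hsq : HasDerivAt (fun t : ℝ => t ^ 2) (2 * t) t := by simpa using hasDerivAt_pow 2 t
    exact ((((hsq.const_mul a).div_const 2).const_add (φ 0)).add
      (((hasDerivAt_id' t).sub (hsq.div_const 2)).const_mul b)).congr_deriv (by ring)
  have := image_le_of_deriv_right_le_deriv_boundary (a := 0) (b := 1)
    (fun t ht => (hφ t ht).continuousAt.continuousWithinAt)
    (fun t ht => (hφ t (Ico_subset_Icc_self ht)).hasDerivWithinAt) (by simp)
    (fun t _ => (hB t).continuousAt.continuousWithinAt) (fun t _ => (hB t).hasDerivWithinAt)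
    (fun t ht => hle t (Ico_subset_Icc_self ht)) (right_mem_Icc.2 zero_le_one)
  linarith

variable {E : Type*} [NormedAddCommGroup E] [InnerProductSpace ℝ E] [CompleteSpace E]

lemma hasDerivAt_comp_line {f : E → ℝ} (hf : Differentiable ℝ f) (c w : E) (t : ℝ) :
    HasDerivAt (fun s : ℝ => f (c + s • w)) ⟪gradient f (c + t • w), w⟫ t := by
  have hline : HasDerivAt (fun s : ℝ => c + s • w) w t := by
    simpa using ((hasDerivAt_id t).smul_const w).const_add c
  rw [gradient, InnerProductSpace.toDual_symm_apply]
  exact (hf _).hasFDerivAt.comp_hasDerivAt t hline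

lemma sub_sub_inner_le_of_inner_gradient_sub_le {f : E → ℝ} (hf : Differentiable ℝ f)
    {c w g : E} {a b : ℝ}
    (hle : ∀ t ∈ Icc (0 : ℝ) 1, ⟪gradient f (c + t • w) - g, w⟫ ≤ a * t + b * (1 - t)) :
    f (c + w) - f c - ⟪g, w⟫ ≤ (a + b) / 2 := by
  have := sub_le_of_hasDerivAt_le_affine (φ := fun t => f (c + t • w) - t * ⟪g, w⟫)
    (fun t _ => (hasDerivAt_comp_line hf c w t).sub ((hasDerivAt_id t).mul_const ⟪g, w⟫))
    (by simpa only [inner_sub_left, id, one_mul] using hle)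
  simp only [one_smul, zero_smul, add_zero, one_mul, zero_mul, sub_zero] at this
  linarith

end Segment

lemma sum_add_mul_le_sqrt {ι : Type*} (s : Finset ι) (A B C : ι → ℝ) :
    ∑ j ∈ s, (A j + B j) * C j ≤ √(2 * ∑ j ∈ s, (A j ^ 2 + B j ^ 2)) * √(∑ j ∈ s, C j ^ 2) :=
  (Real.sum_mul_le_sqrt_mul_sqrt s _ C).trans <| by
    gcongr
    rw [mul_sum]
    exact sum_le_sum fun j _ => by nlinarith [sq_nonneg (A j - B j)]

section BlockLip

variable {blk : Fin d → Fin m} {f : Euc d → ℝ} {Q : Fin m → Matrix (Fin d) (Fin d) ℝ}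

lemma BlockLip.inner_gradient_sub_blockMask_le (hlip : BlockLip blk f Q) (j : Fin m)
    (u x z : Euc d) :
    ⟪gradient f u - gradient f x, blockMask blk j z⟫ ≤
      √(quadForm (Q j) (u - x)) * ‖blockMask blk j z‖ := by
  rw [inner_blockMask_right, blockMask_sub]
  refine (real_inner_le_norm _ _).trans ?_
  gcongr
  exact Real.le_sqrt_of_sq_le (hlip j u x)

lemma BlockLip.block_gap_le (hf : Differentiable ℝ f) (hpsd : ∀ j, (Q j).PosSemidef)
    (hlip : BlockLip blk f Q) (x y : Euc d) (j : Fin m) :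
    f (blockCombine blk j x y) - f (blockCombine blk (j + 1) x y)
        - ⟪gradient f x, blockMask blk j (y - x)⟫ ≤
      (√(quadForm (keepGE blk (j + 1) (Q j)) (y - x)) +
        √(quadForm (keepGE blk (j + 2) (Q j)) (y - x))) * ‖blockMask blk j (y - x)‖ / 2 := by
  rw [blockCombine_eq_add_blockMask blk j x y, quadForm_keepGE, quadForm_keepGE, add_mul]
  refine sub_sub_inner_le_of_inner_gradient_sub_le hf fun t ht => ?_
  have hseg : blockCombine blk (j + 1) x y + t • blockMask blk j (y - x) - x =
      t • blockMaskGE blk (j + 1) (y - x) + (1 - t) • blockMaskGE blk (j + 2) (y - x) := by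
    rw [blockMaskGE_eq_blockMask_add, ← blockCombine_succ_sub]
    module
  calc _ ≤ √(quadForm (Q j) (blockCombine blk (j + 1) x y + t • blockMask blk j (y - x) - x)) *
        ‖blockMask blk j (y - x)‖ := BlockLip.inner_gradient_sub_blockMask_le hlip j _ _ _
    _ ≤ (t * √(quadForm (Q j) (blockMaskGE blk (j + 1) (y - x))) +
          (1 - t) * √(quadForm (Q j) (blockMaskGE blk (j + 2) (y - x)))) *
        ‖blockMask blk j (y - x)‖ := by
      rw [hseg]
      gcongr
      exact sqrt_quadForm_segment_le (hpsd j) _ _ ht.1 ht.2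
    _ = _ := by ring

theorem BlockLip.descent (hf : Differentiable ℝ f) (hpsd : ∀ j, (Q j).PosSemidef)
    (hlip : BlockLip blk f Q) (x y : Euc d) :
    f y - f x - ⟪gradient f x, y - x⟫ ≤ bigL blk Q / 2 * ‖y - x‖ ^ 2 := by
  set h := y - x
  set A : Fin m → ℝ := fun j => √(quadForm (keepGE blk (j + 1) (Q j)) h)
  set B : Fin m → ℝ := fun j => √(quadForm (keepGE blk (j + 2) (Q j)) h)
  have htele : f y - f x - ⟪gradient f x, h⟫ = ∑ j : Fin m, (f (blockCombine blk j x y)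
      - f (blockCombine blk (j + 1) x y) - ⟪gradient f x, blockMask blk j h⟫) := by
    rw [sum_sub_distrib, ← inner_sum, sum_blockMask,
      Fin.sum_univ_eq_sum_range
        (fun j => f (blockCombine blk j x y) - f (blockCombine blk (j + 1) x y)),
      Finset.sum_range_sub', blockCombine_zero, blockCombine_card]
  have hQtilde : ∑ j, (A j ^ 2 + B j ^ 2) = quadForm (Qtilde blk Q) h := by
    simp only [A, B, Qtilde, quadForm_sum, quadForm_add]
    refine Finset.sum_congr rfl fun j _ => ?_
    rw [Real.sq_sqrt, Real.sq_sqrt] <;>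
      rw [quadForm_keepGE] <;> exact quadForm_nonneg (hpsd j) _
  calc f y - f x - ⟪gradient f x, h⟫
      ≤ ∑ j, (A j + B j) * ‖blockMask blk j h‖ / 2 :=
        htele ▸ sum_le_sum fun j _ => BlockLip.block_gap_le hf hpsd hlip x y j
    _ ≤ √(2 * quadForm (Qtilde blk Q) h) * ‖h‖ / 2 := by
      rw [← sum_div, ← hQtilde, ← Real.sqrt_sq (norm_nonneg h), ← sum_norm_blockMask_sq blk h]
      gcongr
      exact sum_add_mul_le_sqrt _ _ _ _
    _ ≤ √(2 * specNorm (Qtilde blk Q) * ‖h‖ ^ 2) * ‖h‖ / 2 := by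
      rw [mul_assoc]
      gcongr
      exact quadForm_le_specNorm_mul _ _
    _ = bigL blk Q / 2 * ‖h‖ ^ 2 := by
      rw [Real.sqrt_mul' _ (sq_nonneg _), Real.sqrt_sq (norm_nonneg _), bigL]
      ring

end BlockLip

end

theorem stmt12_general {d m : ℕ} (blk : Fin d → Fin m)
    (f : Euc d → ℝ) (hdiff : Differentiable ℝ f)
    (Q : Fin m → Matrix (Fin d) (Fin d) ℝ) (hpsd : ∀ j, (Q j).PosSemidef)
    (hlip : BlockLip blk f Q)
    (γ : ℝ) (K : ℕ)
    (ty vprev vcur xsk ysk : Euc d) (Ap as : ℝ) (hAp : 0 < Ap) (has : 0 < as)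
    (hx : xsk = (Ap / (Ap + as)) • ty + (as / (Ap + as)) • vprev)
    (hy : ysk = (Ap / (Ap + as)) • ty + (as / (Ap + as)) • vcur) :
    ∀ u qsk : Euc d,
      (Ap + as) * (f ysk - f xsk) - Ap * (f ty - f xsk)
          + as * ⟪gradient f xsk - qsk, xsk - u⟫ + as * ⟪qsk, xsk - vcur⟫
          - (K : ℝ) * (1 + Ap * γ) / 2 * ‖vcur - vprev‖ ^ 2 ≤
        -(Ap * (f ty - f xsk - ⟪gradient f xsk, ty - xsk⟫))
          + as * ⟪gradient f xsk - qsk, vcur - u⟫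
          + (bigL blk Q * as ^ 2 / (2 * (Ap + as)) - (K : ℝ) * (1 + Ap * γ) / 2) *
              ‖vcur - vprev‖ ^ 2 := by
  intro u qsk
  have hA : 0 < Ap + as := by positivity
  have hyx : ysk - xsk = (as / (Ap + as)) • (vcur - vprev) := by
    rw [hx, hy]; module
  have hsplit : (Ap + as) • (ysk - xsk) = Ap • (ty - xsk) + as • (vcur - xsk) := by
    rw [hx, hy]; match_scalars <;> field_simp <;> ring
  have hdesc : (Ap + as) * (f ysk - f xsk) ≤
      Ap * ⟪gradient f xsk, ty - xsk⟫ + as * ⟪gradient f xsk, vcur - xsk⟫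
        + bigL blk Q * as ^ 2 / (2 * (Ap + as)) * ‖vcur - vprev‖ ^ 2 :=
    calc (Ap + as) * (f ysk - f xsk)
        ≤ (Ap + as) * (⟪gradient f xsk, ysk - xsk⟫ + bigL blk Q / 2 * ‖ysk - xsk‖ ^ 2) := by
          gcongr; linarith [BlockLip.descent hdiff hpsd hlip xsk ysk]
      _ = _ := by
          rw [mul_add, ← real_inner_smul_right, hsplit, inner_add_right, real_inner_smul_right,
            real_inner_smul_right, hyx, norm_smul, mul_pow, Real.norm_of_nonneg (by positivity)]
          field_simp
  simp only [inner_sub_left, inner_sub_right] at hdesc ⊢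
  linarith

theorem stmt12 {d m : ℕ} (blk : Fin d → Fin m) (hmono : Monotone blk)
    (hsurj : Function.Surjective blk)
    (f : Euc d → ℝ) (hconv : ConvexOn ℝ Set.univ f) (hdiff : Differentiable ℝ f)
    (Q : Fin m → Matrix (Fin d) (Fin d) ℝ) (hpsd : ∀ j, (Q j).PosSemidef)
    (hlip : BlockLip blk f Q)
    (γ : ℝ) (hγ : 0 ≤ γ) (K : ℕ) (hK : 1 ≤ K)
    (ty vprev vcur xsk ysk : Euc d) (Ap as : ℝ) (hAp : 0 < Ap) (has : 0 < as)
    (hx : xsk = (Ap / (Ap + as)) • ty + (as / (Ap + as)) • vprev)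
    (hy : ysk = (Ap / (Ap + as)) • ty + (as / (Ap + as)) • vcur) :
    ∀ u qsk : Euc d,
      (Ap + as) * (f ysk - f xsk) - Ap * (f ty - f xsk)
          + as * ⟪gradient f xsk - qsk, xsk - u⟫ + as * ⟪qsk, xsk - vcur⟫
          - (K : ℝ) * (1 + Ap * γ) / 2 * ‖vcur - vprev‖ ^ 2 ≤
        -(Ap * (f ty - f xsk - ⟪gradient f xsk, ty - xsk⟫))
          + as * ⟪gradient f xsk - qsk, vcur - u⟫
          + (bigL blk Q * as ^ 2 / (2 * (Ap + as)) - (K : ℝ) * (1 + Ap * γ) / 2) *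
              ‖vcur - vprev‖ ^ 2 :=
  stmt12_general blk f hdiff Q hpsd hlip γ K ty vprev vcur xsk ysk Ap as hAp has hx hy
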